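/- arXiv:1707.06590 — 2 statements merged into one kernel-verified Lean document; each statement's English description precedes it below -/
import Mathlib

section
/- For every natural number i, ∑_{j=0}^{i} r_{ij} = Cᵢ, the i-th Catalan number. (Since r_{ij} = 0 for j > i, this says the i-th row sum of D(𝔽^S)⁻¹D is Cᵢ.) -/
/-!
The row sum is the `i`-th coefficient of `∑_{j ≤ i} u^j` with `u = xC(x)`. The Catalan equation
`C = 1 + xC²` says that `C` inverts `1 - u`, so the truncated geometric series equals
`C (1 - u^(i+1))`; since `u^(i+1)` is divisible by `x^(i+1)`, its `i`-th coefficient is that of `C`.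
-/

open PowerSeries Finset

/-- The generating function of the Catalan numbers. -/
noncomputable def catalanGF : PowerSeries ℝ :=
  PowerSeries.mk fun n => (catalan n : ℝ)

/-- `r i j` is the coefficient of `x^i` in `(xC(x))^j`, i.e. the `(i,j)` entry of
`D(𝔽^S)⁻¹D`. -/
noncomputable def rEntry (i j : ℕ) : ℝ :=
  PowerSeries.coeff (R := ℝ) i ((PowerSeries.X * catalanGF) ^ j)

theorem catalanGF_eq_one_add_X_mul_sq : catalanGF = 1 + X * catalanGF ^ 2 := by
  ext (_ | n)
  · simp [catalanGF]
  · rw [map_add, coeff_one, coeff_succ_X_mul, if_neg n.succ_ne_zero, zero_add, sq, coeff_mul]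
    simp only [catalanGF, coeff_mk]
    push_cast [catalan_succ' n]
    rfl

theorem catalanGF_mul_one_sub_X_mul : catalanGF * (1 - X * catalanGF) = 1 := by
  linear_combination catalanGF_eq_one_add_X_mul_sq

theorem geom_sum_eq_mul_one_sub_pow {R : Type*} [Ring R] {f u : R} (hf : f * (1 - u) = 1)
    (n : ℕ) : ∑ j ∈ range n, u ^ j = f * (1 - u ^ n) := by
  rw [← mul_neg_geom_sum, ← mul_assoc, hf, one_mul]

theorem PowerSeries.coeff_mul_X_mul_pow_of_lt {R : Type*} [CommSemiring R] (f g : R⟦X⟧)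
    {n m : ℕ} (h : n < m) : coeff n (f * (X * g) ^ m) = 0 := by
  rw [mul_pow, mul_left_comm, coeff_X_pow_mul', if_neg h.not_ge]

/-- The `i`-th row sum of `D(𝔽^S)⁻¹D` is the `i`-th Catalan number. -/
theorem stmt_7 (i : ℕ) :
    ∑ j ∈ Finset.range (i + 1), rEntry i j = (catalan i : ℝ) := by
  have row_sum : ∑ j ∈ range (i + 1), rEntry i j
      = coeff i (∑ j ∈ range (i + 1), (X * catalanGF) ^ j) := (map_sum _ _ _).symm
  rw [row_sum, geom_sum_eq_mul_one_sub_pow catalanGF_mul_one_sub_X_mul, mul_sub, mul_one,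
    map_sub, coeff_mul_X_mul_pow_of_lt _ _ i.lt_succ_self, sub_zero, catalanGF, coeff_mk]
end

section
/- For every natural number i, ∑_{j=0}^{i} q_{ij} = (2i+1)·Cᵢ, where Cᵢ is the i-th Catalan number. (Since q_{ij} = 0 for j > i, this says the i-th row sum of D(𝕃^S)⁻¹D is (2i+1)Cᵢ.) -/
open PowerSeries Finset

/-- The generating function `W(x) = ∑ binom(2n,n) xⁿ` of the central binomial coefficients. -/
noncomputable def centralBinomGF : PowerSeries ℝ :=
  PowerSeries.mk fun n => ((2 * n).choose n : ℝ)

/-- `q i j` is the coefficient of `x^i` in `W(x)·(xC(x))^j`, i.e. the `(i,j)` entry of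
`D(𝕃^S)⁻¹D`. -/
noncomputable def qEntry (i j : ℕ) : ℝ :=
  PowerSeries.coeff (R := ℝ) i (centralBinomGF * (PowerSeries.X * catalanGF) ^ j)

/-!
Summing the geometric series `∑ (xC)^j` gives `1 / (1 - xC) = C`, and the terms with `j > i`
do not reach `x^i`, so the row sum is the `i`-th coefficient of `W C`. Writing `u = xC`, the
Catalan equation reads `u = x + u²`; since `W = u'`, differentiating gives `W = 1 + 2uW`, i.e.
`2x W C = W - 1`, whose coefficient of `x^(i+1)` is `binom(2i+2, i+1) = 2 (2i+1) Cᵢ`.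
-/

lemma Nat.centralBinom_succ_eq_mul_catalan (n : ℕ) :
    (n + 1).centralBinom = 2 * (2 * n + 1) * catalan n := by
  refine Nat.eq_of_mul_eq_mul_left n.succ_pos ?_
  rw [Nat.succ_mul_centralBinom_succ, ← succ_mul_catalan_eq_centralBinom, Nat.succ_eq_add_one]
  ring

lemma PowerSeries.coeff_mul_geom_sum_eq {R : Type*} [CommRing R] {u v : R⟦X⟧}
    (huv : (1 - X * u) * v = 1) (g : R⟦X⟧) (n : ℕ) :
    coeff n (g * ∑ j ∈ range (n + 1), (X * u) ^ j) = coeff n (g * v) := by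
  have hsum : ∑ j ∈ range (n + 1), (X * u) ^ j = v - X ^ (n + 1) * (u ^ (n + 1) * v) := by
    linear_combination (-∑ j ∈ range (n + 1), (X * u) ^ j) * huv - v * geom_sum_mul (X * u) (n + 1)
  rw [hsum, mul_sub, map_sub, mul_left_comm, coeff_X_pow_mul', if_neg (by omega), sub_zero]

lemma catalanGF_eq_map : catalanGF = map (Nat.castRingHom ℝ) catalanSeries := by
  ext n
  simp [catalanGF]

lemma catalanGF_sq_mul_X_add_one : catalanGF ^ 2 * X + 1 = catalanGF := by
  simpa [catalanGF_eq_map] using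
    congrArg (map (Nat.castRingHom ℝ)) catalanSeries_sq_mul_X_add_one

lemma one_sub_X_mul_catalanGF_mul : (1 - X * catalanGF) * catalanGF = 1 := by
  linear_combination -catalanGF_sq_mul_X_add_one

lemma X_mul_catalanGF_eq : X * catalanGF = X + (X * catalanGF) ^ 2 := by
  linear_combination -X * catalanGF_sq_mul_X_add_one

lemma derivative_X_mul_catalanGF : d⁄dX ℝ (X * catalanGF) = centralBinomGF := by
  ext n
  rw [coeff_derivative, coeff_succ_X_mul, catalanGF, centralBinomGF, coeff_mk, coeff_mk,
    ← Nat.centralBinom_eq_two_mul_choose, ← succ_mul_catalan_eq_centralBinom]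
  push_cast
  ring

lemma centralBinomGF_eq : centralBinomGF = 1 + 2 * (X * catalanGF) * centralBinomGF := by
  have h := congrArg (d⁄dX ℝ) X_mul_catalanGF_eq
  rw [map_add, derivative_X, derivative_pow, derivative_X_mul_catalanGF] at h
  simpa using h

lemma coeff_centralBinomGF_mul_catalanGF (n : ℕ) :
    coeff n (centralBinomGF * catalanGF) = (2 * n + 1) * catalan n := by
  have h : X * (C 2 * (centralBinomGF * catalanGF)) = centralBinomGF - 1 := by
    rw [map_ofNat]
    linear_combination -centralBinomGF_eq
  have hcoeff := congrArg (coeff (n + 1)) h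
  have hcentral : coeff (n + 1) centralBinomGF = ((n + 1).centralBinom : ℝ) := by
    rw [centralBinomGF, coeff_mk, Nat.centralBinom_eq_two_mul_choose]
  rw [coeff_succ_X_mul, coeff_C_mul, map_sub, coeff_one, if_neg n.succ_ne_zero, sub_zero,
    hcentral, Nat.centralBinom_succ_eq_mul_catalan] at hcoeff
  push_cast at hcoeff
  linarith

/-- The `i`-th row sum of `D(𝕃^S)⁻¹D` is `(2i+1)·Cᵢ`. -/
theorem stmt_8 (i : ℕ) :
    ∑ j ∈ Finset.range (i + 1), qEntry i j = (2 * (i : ℝ) + 1) * (catalan i : ℝ) := by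
  simp only [qEntry, ← map_sum, ← mul_sum]
  rw [coeff_mul_geom_sum_eq one_sub_X_mul_catalanGF_mul, coeff_centralBinomGF_mul_catalanGF]
end
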